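/- arXiv:1807.11189 — 3 statements merged into one kernel-verified Lean document; each statement's English description precedes it below -/
import Mathlib

section
/- The q-series identity \sum_{n\ge 0} q^{(n^2+n)/2}/(q;q)_n = 1/(q;q^2)_\infty holds as an identity of formal power series in q. -/
/-!
Both sides are congruent to `∏_{j<N} (1 + q^{j+1})` modulo `q^{N+1}`.

For `F(a) = ∑ₙ q^{n(n+1)/2} aⁿ / (q;q)ₙ`, the relation `(q;q)ₙ = (q;q)ₙ₋₁ (1 - qⁿ)` gives Euler's
functional equation `F(a) = (1 + aq) F(aq)`, hence `F(1) = ∏_{j<N} (1 + q^{j+1}) F(q^N)`, and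
`F(q^N) ≡ 1` since all its terms but the first have order `> N`.

On the product side, `(1 + q^j)(1 - q^j) = 1 - q^{2j}` gives
`(-q;q)_N (q;q)_N (q;q²)_{N+1} ≡ (q²;q²)_{N+1} (q;q²)_{N+1} = (q;q)_{2N+2} ≡ (q;q)_N`,
and `(q;q)_N` is a unit.
-/

open PowerSeries Finset

namespace EulerQSeries

theorem prod_range_two_mul {M : Type*} [CommMonoid M] (f : ℕ → M) (n : ℕ) :
    ∏ k ∈ range (2 * n), f k = (∏ j ∈ range n, f (2 * j)) * ∏ j ∈ range n, f (2 * j + 1) := by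
  induction n with
  | zero => simp
  | succ n ih =>
    rw [show 2 * (n + 1) = 2 * n + 1 + 1 by ring, prod_range_succ, prod_range_succ, ih,
      prod_range_succ, prod_range_succ]
    ac_rfl

theorem le_div_two_sq_add_self (n : ℕ) : n ≤ (n ^ 2 + n) / 2 :=
  (Nat.le_div_iff_mul_le two_pos).mpr (by nlinarith)

theorem prod_one_add_mul_prod_one_sub {R ι : Type*} [CommRing R] (s : Finset ι) (f : ι → R) :
    (∏ i ∈ s, (1 + f i)) * ∏ i ∈ s, (1 - f i) = ∏ i ∈ s, (1 - f i ^ 2) := by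
  rw [← prod_mul_distrib]
  exact prod_congr rfl fun i _ => by ring

section CommRing

variable {R : Type*} [CommRing R]

noncomputable def qPochhammer (n : ℕ) : R⟦X⟧ := ∏ j ∈ range n, (1 - X ^ (j + 1))

theorem constantCoeff_qPochhammer (n : ℕ) : constantCoeff (qPochhammer (R := R) n) = 1 := by
  simp [qPochhammer, map_prod]

variable (R) in
noncomputable abbrev modXPow (N : ℕ) : R⟦X⟧ →+* R⟦X⟧ ⧸ Ideal.span {(X : R⟦X⟧) ^ (N + 1)} :=
  Ideal.Quotient.mk _

theorem modXPow_X_pow {N e : ℕ} (h : N < e) : modXPow R N (X ^ e) = 0 :=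
  Ideal.Quotient.eq_zero_iff_mem.mpr (Ideal.mem_span_singleton.mpr (pow_dvd_pow X h))

theorem coeff_eq_of_modXPow_eq {N : ℕ} {f g : R⟦X⟧} (h : modXPow R N f = modXPow R N g) :
    coeff N f = coeff N g := by
  rw [Ideal.Quotient.eq, Ideal.mem_span_singleton, X_pow_dvd_iff] at h
  simpa [sub_eq_zero] using h N (Nat.lt_succ_self N)

theorem modXPow_qPochhammer_add (N k : ℕ) :
    modXPow R N (qPochhammer (N + k)) = modXPow R N (qPochhammer N) := by
  induction k with
  | zero => rfl
  | succ k ih =>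
    rw [qPochhammer, ← add_assoc, prod_range_succ, map_mul, ← qPochhammer, ih, map_sub,
      modXPow_X_pow (by omega), sub_zero, map_one, mul_one]

theorem prod_one_add_mul_qPochhammer (n : ℕ) :
    (∏ j ∈ range n, (1 + X ^ (j + 1))) * qPochhammer n =
      ∏ j ∈ range n, (1 - (X : R⟦X⟧) ^ (2 * (j + 1))) := by
  simp only [qPochhammer, prod_one_add_mul_prod_one_sub, ← pow_mul, mul_comm]

theorem prod_odd_mul_prod_even (n : ℕ) :
    (∏ j ∈ range n, (1 - X ^ (2 * j + 1))) * ∏ j ∈ range n, (1 - (X : R⟦X⟧) ^ (2 * (j + 1))) =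
      qPochhammer (2 * n) := by
  rw [qPochhammer, prod_range_two_mul]
  rfl

end CommRing

section Field

variable {K : Type*} [Field K]

theorem modXPow_prod_one_add_mul_prod_odd (N : ℕ) :
    modXPow K N ((∏ j ∈ range N, (1 + X ^ (j + 1))) *
      ∏ j ∈ range (N + 1), (1 - X ^ (2 * j + 1))) = 1 := by
  have hunit : IsUnit (modXPow K N (qPochhammer N)) :=
    (isUnit_iff_constantCoeff.mpr (by simp [constantCoeff_qPochhammer])).map _
  refine hunit.mul_left_injective ?_
  calc modXPow K N ((∏ j ∈ range N, (1 + X ^ (j + 1))) *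
          ∏ j ∈ range (N + 1), (1 - X ^ (2 * j + 1))) * modXPow K N (qPochhammer N)
      = modXPow K N ((∏ j ∈ range (N + 1), (1 - X ^ (2 * j + 1))) *
          ∏ j ∈ range N, (1 - X ^ (2 * (j + 1)))) := by
        rw [← map_mul, ← prod_one_add_mul_qPochhammer]
        congr 1
        ring
    _ = modXPow K N ((∏ j ∈ range (N + 1), (1 - X ^ (2 * j + 1))) *
          ∏ j ∈ range (N + 1), (1 - X ^ (2 * (j + 1)))) := by
        rw [prod_range_succ (fun j => 1 - (X : K⟦X⟧) ^ (2 * (j + 1))) N, map_mul, map_mul,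
          map_mul, map_sub, modXPow_X_pow (by omega), map_one, sub_zero, mul_one]
    _ = modXPow K N (qPochhammer N) := by
        rw [prod_odd_mul_prod_even, show 2 * (N + 1) = N + (N + 2) by ring,
          modXPow_qPochhammer_add]
    _ = 1 * modXPow K N (qPochhammer N) := (one_mul _).symm

theorem modXPow_inv_prod_odd (N : ℕ) :
    modXPow K N (∏ j ∈ range (N + 1), (1 - X ^ (2 * j + 1)))⁻¹ =
      modXPow K N (∏ j ∈ range N, (1 + X ^ (j + 1))) := by
  set odd := ∏ j ∈ range (N + 1), (1 - (X : K⟦X⟧) ^ (2 * j + 1))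
  have hodd : odd * odd⁻¹ = 1 :=
    PowerSeries.mul_inv_cancel _ (by simp [odd, map_prod])
  calc modXPow K N odd⁻¹
      = modXPow K N ((∏ j ∈ range N, (1 + X ^ (j + 1))) * odd) * modXPow K N odd⁻¹ := by
        rw [modXPow_prod_one_add_mul_prod_odd, one_mul]
    _ = modXPow K N (∏ j ∈ range N, (1 + X ^ (j + 1))) := by
        rw [← map_mul, mul_assoc, hodd, mul_one]

/-- The `n`-th term of `F(q^m)`. -/
noncomputable def eulerTerm (m n : ℕ) : K⟦X⟧ := X ^ ((n ^ 2 + n) / 2 + m * n) * (qPochhammer n)⁻¹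

theorem eulerTerm_zero_right (m : ℕ) : eulerTerm (K := K) m 0 = 1 := by
  simp [eulerTerm, qPochhammer]

theorem modXPow_eulerTerm {N m n : ℕ} (h : N < (n ^ 2 + n) / 2 + m * n) :
    modXPow K N (eulerTerm m n) = 0 := by
  rw [eulerTerm, map_mul, modXPow_X_pow h, zero_mul]

theorem eulerTerm_succ_sub_eulerTerm_succ (m n : ℕ) :
    eulerTerm (K := K) m (n + 1) - eulerTerm (m + 1) (n + 1) =
      X ^ (m + 1) * eulerTerm (m + 1) n := by
  have hexp : ((n + 1) ^ 2 + (n + 1)) / 2 = (n ^ 2 + n) / 2 + (n + 1) := by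
    rw [show (n + 1) ^ 2 + (n + 1) = n ^ 2 + n + (n + 1) * 2 by ring,
      Nat.add_mul_div_right _ _ two_pos]
  have hinv : (1 - X ^ (n + 1)) * (qPochhammer (n + 1))⁻¹ = (qPochhammer n : K⟦X⟧)⁻¹ := by
    rw [qPochhammer, prod_range_succ, PowerSeries.mul_inv_rev, ← mul_assoc,
      PowerSeries.mul_inv_cancel _ (by simp), one_mul, qPochhammer]
  simp only [eulerTerm, hexp, ← hinv]
  ring

theorem sum_eulerTerm_sub_mul_sum_eulerTerm (N m : ℕ) :
    ∑ n ∈ range (N + 1), eulerTerm (K := K) m n -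
      (1 + X ^ (m + 1)) * ∑ n ∈ range (N + 1), eulerTerm (m + 1) n =
      -(X ^ (m + 1) * eulerTerm (m + 1) N) := by
  have htelescope : ∑ n ∈ range (N + 1), (eulerTerm (K := K) m n - eulerTerm (m + 1) n) =
      X ^ (m + 1) * ∑ n ∈ range N, eulerTerm (m + 1) n := by
    rw [sum_range_succ', mul_sum]
    simp [eulerTerm_succ_sub_eulerTerm_succ, eulerTerm_zero_right]
  calc ∑ n ∈ range (N + 1), eulerTerm (K := K) m n -
        (1 + X ^ (m + 1)) * ∑ n ∈ range (N + 1), eulerTerm (m + 1) n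
      = ∑ n ∈ range (N + 1), (eulerTerm m n - eulerTerm (m + 1) n) -
          X ^ (m + 1) * ∑ n ∈ range (N + 1), eulerTerm (m + 1) n := by
        rw [sum_sub_distrib]
        ring
    _ = -(X ^ (m + 1) * eulerTerm (m + 1) N) := by
        rw [htelescope, sum_range_succ _ N]
        ring

theorem modXPow_sum_eulerTerm_eq_mul_sum_eulerTerm_succ (N m : ℕ) :
    modXPow K N (∑ n ∈ range (N + 1), eulerTerm m n) =
      modXPow K N ((1 + X ^ (m + 1)) * ∑ n ∈ range (N + 1), eulerTerm (m + 1) n) := by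
  have hlt (k : ℕ) : N < ((N + 1) ^ 2 + (N + 1)) / 2 + k * (N + 1) :=
    (le_div_two_sq_add_self (N + 1)).trans (Nat.le_add_right _ _)
  rw [← sub_eq_zero, ← map_sub, sum_eulerTerm_sub_mul_sum_eulerTerm, map_neg, neg_eq_zero,
    ← eulerTerm_succ_sub_eulerTerm_succ, map_sub, modXPow_eulerTerm (hlt m),
    modXPow_eulerTerm (hlt (m + 1)), sub_zero]

theorem modXPow_sum_eulerTerm_self (N : ℕ) :
    modXPow K N (∑ n ∈ range (N + 1), eulerTerm N n) = 1 := by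
  have hlt (n : ℕ) : N < ((n + 1) ^ 2 + (n + 1)) / 2 + N * (n + 1) := by
    have := le_div_two_sq_add_self (n + 1)
    have : N ≤ N * (n + 1) := Nat.le_mul_of_pos_right N n.succ_pos
    omega
  rw [sum_range_succ', eulerTerm_zero_right, map_add, map_sum,
    sum_eq_zero fun n _ => modXPow_eulerTerm (hlt n), zero_add, map_one]

theorem modXPow_sum_eulerTerm_zero (N k : ℕ) :
    modXPow K N (∑ n ∈ range (N + 1), eulerTerm 0 n) =
      modXPow K N ((∏ j ∈ range k, (1 + X ^ (j + 1))) * ∑ n ∈ range (N + 1), eulerTerm k n) := by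
  induction k with
  | zero => rw [prod_range_zero, one_mul]
  | succ k ih =>
    rw [ih, map_mul, modXPow_sum_eulerTerm_eq_mul_sum_eulerTerm_succ, ← map_mul, prod_range_succ,
      mul_assoc]

end Field

end EulerQSeries

open EulerQSeries in
/-- Euler's `q`-series identity
`∑_{n≥0} q^{(n²+n)/2}/(q;q)_n = 1/(q;q²)_∞`
as formal power series in `q`, stated coefficient-wise: the `N`-th coefficient of the
(convergent) sum only receives contributions from `n ≤ N`, and the `N`-th coefficient
of the infinite product inverse only depends on the factors `1 - q^{2j+1}` with `j ≤ N`. -/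
theorem euler_q_series (N : ℕ) :
    coeff (R := ℚ) N (∑ n ∈ range (N + 1),
        X ^ ((n ^ 2 + n) / 2) * (∏ j ∈ range n, (1 - X ^ (j + 1) : PowerSeries ℚ))⁻¹) =
    coeff (R := ℚ) N ((∏ j ∈ range (N + 1), (1 - X ^ (2 * j + 1) : PowerSeries ℚ))⁻¹) := by
  have hsum : ∑ n ∈ range (N + 1),
      X ^ ((n ^ 2 + n) / 2) * (∏ j ∈ range n, (1 - X ^ (j + 1) : PowerSeries ℚ))⁻¹ =
      ∑ n ∈ range (N + 1), eulerTerm 0 n := by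
    simp only [eulerTerm, qPochhammer, zero_mul, add_zero]
  rw [hsum]
  apply coeff_eq_of_modXPow_eq
  rw [modXPow_sum_eulerTerm_zero N N, map_mul, modXPow_sum_eulerTerm_self, mul_one,
    modXPow_inv_prod_odd]
end

section
/- Let cp_1(n,m) be the number of partitions of n into m parts, all parts at least 2, consecutive parts differing by at least 2, and differing by at least 4 unless their sum is a multiple of 3. Then \sum_{m,n\ge 0} cp_1(n,m) q^n x^m = \sum_{n_1,n_2\ge 0} q^{2n_1^2 + 6n_1 n_2 + 6n_2^2} x^{n_1+2n_2} / ((q;q)_{n_1} (q^3;q^3)_{n_2}). -/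
/-!
Let `F c ∈ ℚ⟦q⟧⟦x⟧` be the generating function of the partitions in the statement whose parts
are all at least `c` (`x` counts the parts, `q` their sum). Adding 3 to every part shows
`F (c + 3) (x) = F c (q³x)`, and splitting off the smallest part (the two smallest when they
are `2, 4`) gives `F 2 = F 3 + x q² F 6 + x² q⁶ F 8`, `F 3 = F 4 + x q³ F 6` and
`F 4 = F 5 + x q⁴ F 8`. Rewriting `F 5`, `F 6`, `F 8` through `F 2` and `F 3`, this is a system
that determines `(F 2, F 3, F 4)` from the constant term, because the coefficient of `x^M` of
`F 2` reappears multiplied by `q^(3M)` on the other side.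

The double sums `G u v = ∑ q^(2a²+6ab+6b²+ua+vb) x^(a+2b) / ((q;q)_a (q³;q³)_b)` satisfy
`G u v = G (u+1) v + x q^(u+2) G (u+4) (v+6)`, `G u v = G u (v+3) + x² q^(v+6) G (u+6) (v+12)`
(from `1 - q^a` and `1 - q^(3b)` cancelling against the last Pochhammer factor) and
`G (u+3) (v+6) (x) = G u v (q³x)`, so `(G 0 0, G 1 3, G 2 6)` solves the same system.
-/

open PowerSeries Finset

namespace Capparelli

theorem finite_setOf_length_sum (M N : ℕ) : {l : List ℕ | l.length = M ∧ l.sum = N}.Finite := by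
  refine ((List.finite_length_eq (α := Fin (N + 1)) M).image (List.map Fin.val)).subset ?_
  rintro l ⟨hlen, hsum⟩
  refine ⟨l.map (Fin.ofNat (N + 1)), by simpa using hlen, ?_⟩
  conv_rhs => rw [← List.map_id l]
  rw [List.map_map]
  refine List.map_congr_left fun x hx => ?_
  exact Nat.mod_eq_of_lt (Nat.lt_succ_of_le (hsum ▸ List.le_sum_of_mem hx))

instance (P : List ℕ → Prop) (M N : ℕ) :
    Finite {l : List ℕ // l.length = M ∧ l.sum = N ∧ P l} :=
  ((finite_setOf_length_sum M N).subset fun _ h => ⟨h.1, h.2.1⟩).to_subtype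

/-- `∑ x ^ l.length * q ^ l.sum` over the lists `l` satisfying `P`, where the inner variable `q`
appears as `C X` in the outer ring. -/
noncomputable def listGF (P : List ℕ → Prop) : ℚ⟦X⟧⟦X⟧ :=
  mk fun M => mk fun N => Nat.card {l : List ℕ // l.length = M ∧ l.sum = N ∧ P l}

theorem coeff_coeff_listGF (P : List ℕ → Prop) (M N : ℕ) :
    coeff N (coeff M (listGF P)) = Nat.card {l : List ℕ // l.length = M ∧ l.sum = N ∧ P l} := by
  simp [listGF]

theorem listGF_and_add_listGF_and_not (P Q : List ℕ → Prop) :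
    listGF (fun l => P l ∧ Q l) + listGF (fun l => P l ∧ ¬ Q l) = listGF P := by
  classical
  ext M N
  simp only [map_add, coeff_coeff_listGF]
  rw [← Nat.cast_add, ← Nat.card_sum]
  congr 1
  let A := fun l : List ℕ => l.length = M ∧ l.sum = N ∧ P l
  refine Nat.card_congr ((Equiv.sumCongr
    ((Equiv.subtypeSubtypeEquivSubtypeInter A Q).trans (Equiv.subtypeEquivRight fun l => ?_))
    ((Equiv.subtypeSubtypeEquivSubtypeInter A (¬ Q ·)).trans
      (Equiv.subtypeEquivRight fun l => ?_))).symm.trans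
    (Equiv.sumCompl fun l : Subtype A => Q l)) <;> simp only [A, and_assoc]

theorem card_exists_eq_of_injective {g : List ℕ → List ℕ} (hg : Function.Injective g)
    (P : List ℕ → Prop) (M N : ℕ) :
    Nat.card {l : List ℕ // l.length = M ∧ l.sum = N ∧ ∃ t, l = g t ∧ P t} =
      Nat.card {t : List ℕ // (g t).length = M ∧ (g t).sum = N ∧ P t} := by
  refine (Nat.card_eq_of_bijective (fun t => ⟨g t.1, t.2.1, t.2.2.1, t.1, rfl, t.2.2.2⟩)
    ⟨fun t s h => Subtype.ext (hg (congrArg Subtype.val h)), ?_⟩).symm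
  rintro ⟨_, hM, hN, t, rfl, ht⟩
  exact ⟨⟨t, hM, hN, ht⟩, rfl⟩

theorem listGF_cons (h : ℕ) (P : List ℕ → Prop) :
    listGF (fun l => ∃ t, l = h :: t ∧ P t) = X * C X ^ h * listGF P := by
  ext M N
  rw [coeff_coeff_listGF, card_exists_eq_of_injective List.cons_injective]
  simp only [List.length_cons, List.sum_cons]
  rcases M with _ | m
  · simp
  rw [mul_assoc, coeff_succ_X_mul, ← map_pow, coeff_C_mul, coeff_X_pow_mul']
  split_ifs with hN
  · rw [coeff_coeff_listGF]
    exact congrArg _ (Nat.card_congr (Equiv.subtypeEquivRight fun t =>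
      and_congr (by omega) (and_congr_left' (by omega))))
  · exact Nat.cast_eq_zero.mpr <| Nat.card_eq_zero.mpr <|
      Or.inl ⟨fun ⟨t, _, ht, _⟩ => hN (by omega)⟩

theorem listGF_map_add (k : ℕ) (P : List ℕ → Prop) :
    listGF (fun l => ∃ t, l = t.map (· + k) ∧ P t) = rescale (X ^ k) (listGF P) := by
  ext M N
  rw [coeff_coeff_listGF,
    card_exists_eq_of_injective (List.map_injective_iff.mpr (add_left_injective k))]
  simp only [List.length_map, List.sum_map_add, List.map_id', List.map_const', List.sum_replicate,
    smul_eq_mul]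
  rw [coeff_rescale, ← pow_mul, mul_comm k, coeff_X_pow_mul']
  split_ifs with hN
  · rw [coeff_coeff_listGF]
    exact congrArg _ (Nat.card_congr (Equiv.subtypeEquivRight fun t =>
      ⟨fun ⟨h₁, h₂, h₃⟩ => ⟨h₁, by subst h₁; omega, h₃⟩,
        fun ⟨h₁, h₂, h₃⟩ => ⟨h₁, by subst h₁; omega, h₃⟩⟩))
  · exact Nat.cast_eq_zero.mpr <| Nat.card_eq_zero.mpr <|
      Or.inl ⟨fun ⟨t, h₁, ht, _⟩ => hN (by subst h₁; omega)⟩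

theorem coeff_zero_listGF {P : List ℕ → Prop} (hP : P []) : coeff 0 (listGF P) = 1 := by
  ext N
  rw [coeff_coeff_listGF, coeff_one]
  split_ifs with hN
  · subst hN
    have : Unique {l : List ℕ // l.length = 0 ∧ l.sum = 0 ∧ P l} :=
      ⟨⟨⟨[], rfl, rfl, hP⟩⟩, fun l => Subtype.ext (List.length_eq_zero_iff.mp l.2.1)⟩
    rw [Nat.card_unique, Nat.cast_one]
  · exact Nat.cast_eq_zero.mpr <| Nat.card_eq_zero.mpr <| Or.inl
      ⟨fun ⟨l, hl, hs, _⟩ => hN (by rw [List.length_eq_zero_iff.mp hl] at hs; exact hs.symm)⟩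

def CapparelliRel (a b : ℕ) : Prop := a + 2 ≤ b ∧ ((a + b) % 3 = 0 ∨ a + 4 ≤ b)

def IsCapparelli (c : ℕ) (l : List ℕ) : Prop := (∀ x ∈ l, c ≤ x) ∧ l.IsChain CapparelliRel

def IsCapparelliTail (h : ℕ) (t : List ℕ) : Prop :=
  t.IsChain CapparelliRel ∧ ∀ y ∈ t.head?, CapparelliRel h y

noncomputable def capparelliGF (c : ℕ) : ℚ⟦X⟧⟦X⟧ := listGF (IsCapparelli c)

theorem capparelliRel_add_three {a b : ℕ} :
    CapparelliRel (a + 3) (b + 3) ↔ CapparelliRel a b := by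
  unfold CapparelliRel
  omega

theorem isCapparelli_iff_head {c : ℕ} {l : List ℕ} :
    IsCapparelli c l ↔ l.IsChain CapparelliRel ∧ ∀ y ∈ l.head?, c ≤ y := by
  refine ⟨fun ⟨hc, hl⟩ => ⟨hl, fun y hy => hc y (List.mem_of_mem_head? hy)⟩,
    fun ⟨hl, hc⟩ => ⟨?_, hl⟩⟩
  refine hl.induction (c ≤ ·) _ (fun x y hxy hx => ?_) fun hne => hc _ (List.head_mem_head? hne)
  unfold CapparelliRel at hxy
  omega

theorem isCapparelli_cons {c h : ℕ} {t : List ℕ} :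
    IsCapparelli c (h :: t) ↔ c ≤ h ∧ IsCapparelliTail h t := by
  rw [isCapparelli_iff_head, List.isChain_cons, IsCapparelliTail]
  simp only [List.head?_cons, Option.mem_def, Option.some.injEq, forall_eq']
  tauto

theorem isCapparelliTail_cons {h a : ℕ} {s : List ℕ} :
    IsCapparelliTail h (a :: s) ↔ CapparelliRel h a ∧ IsCapparelliTail a s := by
  simp only [IsCapparelliTail, List.isChain_cons, List.head?_cons, Option.mem_def,
    Option.some.injEq, forall_eq']
  tauto

theorem isCapparelliTail_iff {h d : ℕ} (hd : ∀ y, CapparelliRel h y ↔ d ≤ y) {t : List ℕ} :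
    IsCapparelliTail h t ↔ IsCapparelli d t := by
  simp only [IsCapparelliTail, isCapparelli_iff_head, hd]

theorem isCapparelli_add_three {c : ℕ} {l : List ℕ} :
    IsCapparelli (c + 3) l ↔ ∃ t, l = t.map (· + 3) ∧ IsCapparelli c t := by
  constructor
  · rintro ⟨hc, hl⟩
    have hmap : l = (l.map (· - 3)).map (· + 3) := by
      rw [List.map_map]
      conv_lhs => rw [← List.map_id l]
      exact List.map_congr_left fun x hx =>
        (Nat.sub_add_cancel (show 3 ≤ x by have := hc x hx; omega)).symm
    refine ⟨l.map (· - 3), hmap, fun x hx => ?_, ?_⟩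
    · obtain ⟨y, hy, rfl⟩ := List.mem_map.mp hx
      have := hc y hy
      omega
    · rw [hmap] at hl
      exact List.isChain_of_isChain_map _ (fun a b => capparelliRel_add_three.mp) hl
  · rintro ⟨t, rfl, hc, ht⟩
    refine ⟨fun x hx => ?_,
      List.isChain_map_of_isChain (· + 3) (fun a b => capparelliRel_add_three.mpr) ht⟩
    obtain ⟨y, hy, rfl⟩ := List.mem_map.mp hx
    exact Nat.add_le_add_right (hc y hy) 3

theorem capparelliGF_add_three (c : ℕ) :
    capparelliGF (c + 3) = rescale (X ^ 3) (capparelliGF c) := by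
  rw [capparelliGF, capparelliGF, ← listGF_map_add]
  congr 1
  funext l
  exact propext isCapparelli_add_three

theorem capparelliGF_eq_add (c : ℕ) :
    capparelliGF c = capparelliGF (c + 1) + X * C X ^ c * listGF (IsCapparelliTail c) := by
  have hne : ∀ l, (IsCapparelli c l ∧ ¬ l.head? = some c) ↔ IsCapparelli (c + 1) l := by
    rintro (_ | ⟨h, t⟩)
    · simp [IsCapparelli]
    · simp only [isCapparelli_cons, List.head?_cons, Option.some.injEq]
      rw [← show c ≤ h ∧ h ≠ c ↔ c + 1 ≤ h by omega]
      tauto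
  have heq : ∀ l, (IsCapparelli c l ∧ l.head? = some c) ↔
      ∃ t, l = c :: t ∧ IsCapparelliTail c t := by
    rintro (_ | ⟨h, t⟩)
    · simp
    · simp only [isCapparelli_cons, List.head?_cons, Option.some.injEq, List.cons.injEq]
      constructor
      · rintro ⟨⟨-, ht⟩, rfl⟩
        exact ⟨t, ⟨rfl, rfl⟩, ht⟩
      · rintro ⟨t, ⟨rfl, rfl⟩, ht⟩
        exact ⟨⟨le_rfl, ht⟩, rfl⟩
  rw [capparelliGF, capparelliGF,
    ← listGF_and_add_listGF_and_not _ (fun l => l.head? = some c)]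
  simp only [hne, heq, listGF_cons]
  ring

theorem listGF_isCapparelliTail {h d : ℕ} (hd : ∀ y, CapparelliRel h y ↔ d ≤ y) :
    listGF (IsCapparelliTail h) = capparelliGF d := by
  rw [capparelliGF]
  congr 1
  funext t
  exact propext (isCapparelliTail_iff hd)

theorem listGF_isCapparelliTail_two :
    listGF (IsCapparelliTail 2) = capparelliGF 6 + X * C X ^ 4 * capparelliGF 8 := by
  have hR₄ : ∀ y, CapparelliRel 4 y ↔ 8 ≤ y := fun y => by unfold CapparelliRel; omega
  have hne : ∀ t, (IsCapparelliTail 2 t ∧ ¬ t.head? = some 4) ↔ IsCapparelli 6 t := by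
    rintro (_ | ⟨a, s⟩)
    · simp [IsCapparelliTail, IsCapparelli]
    · simp only [isCapparelliTail_cons, isCapparelli_cons, List.head?_cons, Option.some.injEq]
      rw [← show CapparelliRel 2 a ∧ a ≠ 4 ↔ 6 ≤ a by unfold CapparelliRel; omega]
      tauto
  have heq : ∀ t, (IsCapparelliTail 2 t ∧ t.head? = some 4) ↔
      ∃ s, t = 4 :: s ∧ IsCapparelli 8 s := by
    rintro (_ | ⟨a, s⟩)
    · simp
    · simp only [isCapparelliTail_cons, List.head?_cons, Option.some.injEq, List.cons.injEq]
      constructor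
      · rintro ⟨⟨-, hs⟩, rfl⟩
        exact ⟨s, ⟨rfl, rfl⟩, (isCapparelliTail_iff hR₄).mp hs⟩
      · rintro ⟨s, ⟨rfl, rfl⟩, hs⟩
        exact ⟨⟨by unfold CapparelliRel; omega, (isCapparelliTail_iff hR₄).mpr hs⟩, rfl⟩
  rw [← listGF_and_add_listGF_and_not _ (fun t => t.head? = some 4), capparelliGF, capparelliGF]
  simp only [hne, heq, listGF_cons]
  ring

def pairsOfWeight (M : ℕ) : Finset (ℕ × ℕ) :=
  (range (M + 1) ×ˢ range (M + 1)).filter fun p => p.1 + 2 * p.2 = M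

theorem mem_pairsOfWeight {M : ℕ} {p : ℕ × ℕ} : p ∈ pairsOfWeight M ↔ p.1 + 2 * p.2 = M := by
  simp only [pairsOfWeight, mem_filter, mem_product, mem_range]
  omega

section PairSeries

variable {R : Type*} [CommRing R]

/-- `∑ f a b * X ^ (a + 2 * b)` over all `a, b : ℕ`. -/
def pairSeries (f : ℕ → ℕ → R) : R⟦X⟧ :=
  mk fun M => ∑ p ∈ pairsOfWeight M, f p.1 p.2

theorem coeff_pairSeries (f : ℕ → ℕ → R) (M : ℕ) :
    coeff M (pairSeries f) = ∑ p ∈ pairsOfWeight M, f p.1 p.2 :=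
  coeff_mk _ _

theorem coeff_zero_pairSeries (f : ℕ → ℕ → R) : coeff 0 (pairSeries f) = f 0 0 := by
  rw [coeff_pairSeries, show pairsOfWeight 0 = {(0, 0)} by decide, sum_singleton]

theorem pairSeries_sub (f g : ℕ → ℕ → R) :
    pairSeries (fun a b => f a b - g a b) = pairSeries f - pairSeries g := by
  ext M
  simp only [coeff_pairSeries, map_sub, sum_sub_distrib]

theorem pairSeries_C_mul (r : R) (f : ℕ → ℕ → R) :
    pairSeries (fun a b => r * f a b) = C r * pairSeries f := by
  ext M
  simp only [coeff_pairSeries, coeff_C_mul, mul_sum]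

theorem rescale_pairSeries (r : R) (f : ℕ → ℕ → R) :
    rescale r (pairSeries f) = pairSeries fun a b => r ^ (a + 2 * b) * f a b := by
  ext M
  rw [coeff_rescale, coeff_pairSeries, coeff_pairSeries, mul_sum]
  exact sum_congr rfl fun p hp => by rw [mem_pairsOfWeight.mp hp]

theorem pairSeries_eq_X_pow_mul {f : ℕ → ℕ → R} {i j : ℕ}
    (hf : ∀ a b, f a b ≠ 0 → i ≤ a ∧ j ≤ b) :
    pairSeries f = X ^ (i + 2 * j) * pairSeries fun a b => f (a + i) (b + j) := by
  ext M
  rw [coeff_X_pow_mul', coeff_pairSeries]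
  split_ifs with hM
  · rw [coeff_pairSeries]
    symm
    refine sum_bij_ne_zero (fun p _ _ => (p.1 + i, p.2 + j)) ?_ ?_ ?_ fun _ _ _ => rfl
    · intro p hp _
      rw [mem_pairsOfWeight] at hp ⊢
      omega
    · intro p _ _ q _ _ h
      simp only [Prod.mk.injEq] at h
      exact Prod.ext (by omega) (by omega)
    · rintro ⟨a, b⟩ hp hne
      obtain ⟨ha, hb⟩ := hf a b hne
      rw [mem_pairsOfWeight] at hp
      refine ⟨(a - i, b - j), mem_pairsOfWeight.mpr (by omega), ?_, ?_⟩
      · simpa [Nat.sub_add_cancel ha, Nat.sub_add_cancel hb] using hne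
      · simp [Nat.sub_add_cancel ha, Nat.sub_add_cancel hb]
  · refine sum_eq_zero fun p hp => by_contra fun hne => ?_
    have := hf _ _ hne
    rw [mem_pairsOfWeight] at hp
    omega

end PairSeries

theorem mul_inv_prod_range_succ {k : Type*} [Field k] {f : ℕ → k⟦X⟧}
    (hf : ∀ j, constantCoeff (f j) ≠ 0) (n : ℕ) :
    f n * (∏ j ∈ range (n + 1), f j)⁻¹ = (∏ j ∈ range n, f j)⁻¹ := by
  rw [prod_range_succ, PowerSeries.mul_inv_rev, ← mul_assoc,
    PowerSeries.mul_inv_cancel _ (hf n), one_mul]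

noncomputable def agTerm (u v a b : ℕ) : ℚ⟦X⟧ :=
  X ^ (2 * a ^ 2 + 6 * a * b + 6 * b ^ 2 + u * a + v * b) *
    (∏ j ∈ range a, (1 - X ^ (j + 1)))⁻¹ * (∏ j ∈ range b, (1 - X ^ (3 * (j + 1))))⁻¹

theorem agTerm_succ_left_sub (u v a b : ℕ) :
    agTerm u v (a + 1) b - agTerm (u + 1) v (a + 1) b =
      X ^ (u + 2) * agTerm (u + 4) (v + 6) a b := by
  have h := mul_inv_prod_range_succ (f := fun j => (1 - X ^ (j + 1) : ℚ⟦X⟧)) (by simp) a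
  simp only [agTerm]
  linear_combination
    (X ^ (2 * a ^ 2 + 6 * a * b + 6 * b ^ 2 + (u + 4) * a + (v + 6) * b + (u + 2)) *
      (∏ j ∈ range b, (1 - X ^ (3 * (j + 1)) : ℚ⟦X⟧))⁻¹) * h

theorem agTerm_succ_right_sub (u v a b : ℕ) :
    agTerm u v a (b + 1) - agTerm u (v + 3) a (b + 1) =
      X ^ (v + 6) * agTerm (u + 6) (v + 12) a b := by
  have h := mul_inv_prod_range_succ (f := fun j => (1 - X ^ (3 * (j + 1)) : ℚ⟦X⟧)) (by simp) b
  simp only [agTerm]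
  linear_combination
    (X ^ (2 * a ^ 2 + 6 * a * b + 6 * b ^ 2 + (u + 6) * a + (v + 12) * b + (v + 6)) *
      (∏ j ∈ range a, (1 - X ^ (j + 1) : ℚ⟦X⟧))⁻¹) * h

theorem agTerm_zero_left (u v b : ℕ) : agTerm (u + 1) v 0 b = agTerm u v 0 b := by
  simp [agTerm]

theorem agTerm_zero_right (u v a : ℕ) : agTerm u (v + 3) a 0 = agTerm u v a 0 := by
  simp [agTerm]

theorem agTerm_add_three_six (u v a b : ℕ) :
    agTerm (u + 3) (v + 6) a b = (X ^ 3) ^ (a + 2 * b) * agTerm u v a b := by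
  simp only [agTerm]
  ring

theorem coeff_agTerm_eq_zero {u v a b N : ℕ} (h : N < a ∨ N < b) :
    coeff N (agTerm u v a b) = 0 := by
  rw [agTerm, mul_assoc, coeff_X_pow_mul', if_neg]
  rcases h with h | h <;> nlinarith

noncomputable def andrewsGordon (u v : ℕ) : ℚ⟦X⟧⟦X⟧ := pairSeries (agTerm u v)

theorem andrewsGordon_eq_add_X_mul (u v : ℕ) :
    andrewsGordon u v =
      andrewsGordon (u + 1) v + X * C X ^ (u + 2) * andrewsGordon (u + 4) (v + 6) := by
  rw [← sub_eq_iff_eq_add', andrewsGordon, andrewsGordon, andrewsGordon, ← pairSeries_sub,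
    pairSeries_eq_X_pow_mul (i := 1) (j := 0)]
  · simp only [add_zero, mul_zero, pow_one, agTerm_succ_left_sub, pairSeries_C_mul, map_pow,
      mul_assoc]
  · rintro (_ | a) b h
    · exact absurd (by rw [agTerm_zero_left, sub_self]) h
    · omega

theorem andrewsGordon_eq_add_X_sq_mul (u v : ℕ) :
    andrewsGordon u v =
      andrewsGordon u (v + 3) + X ^ 2 * C X ^ (v + 6) * andrewsGordon (u + 6) (v + 12) := by
  rw [← sub_eq_iff_eq_add', andrewsGordon, andrewsGordon, andrewsGordon, ← pairSeries_sub,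
    pairSeries_eq_X_pow_mul (i := 0) (j := 1)]
  · simp only [add_zero, zero_add, mul_one, agTerm_succ_right_sub, pairSeries_C_mul, map_pow,
      mul_assoc]
  · rintro a (_ | b) h
    · exact absurd (by rw [agTerm_zero_right, sub_self]) h
    · omega

theorem rescale_andrewsGordon (u v : ℕ) :
    rescale (X ^ 3) (andrewsGordon u v) = andrewsGordon (u + 3) (v + 6) := by
  simp only [andrewsGordon, rescale_pairSeries, ← agTerm_add_three_six]

theorem coeff_zero_andrewsGordon (u v : ℕ) : coeff 0 (andrewsGordon u v) = 1 := by
  simp [andrewsGordon, coeff_zero_pairSeries, agTerm]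

theorem coeff_coeff_andrewsGordon (u v N M : ℕ) :
    coeff N (coeff M (andrewsGordon u v)) =
      ∑ p ∈ (range (N + 1) ×ˢ range (N + 1)).filter (fun p => p.1 + 2 * p.2 = M),
        coeff N (agTerm u v p.1 p.2) := by
  rw [andrewsGordon, coeff_pairSeries, map_sum,
    ← sum_filter_of_ne (p := fun p => p.1 ≤ N ∧ p.2 ≤ N)]
  · congr 1
    ext ⟨a, b⟩
    simp only [pairsOfWeight, mem_filter, mem_product, mem_range]
    omega
  · intro p _ hp
    by_contra h
    exact hp (coeff_agTerm_eq_zero (by omega))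

structure IsCapparelliSystem (F₂ F₃ F₄ : ℚ⟦X⟧⟦X⟧) : Prop where
  eq₂ : F₂ = F₃ + X * C X ^ 2 * rescale (X ^ 3) F₃ + X ^ 2 * C X ^ 6 * rescale (X ^ 6) F₂
  eq₃ : F₃ = F₄ + X * C X ^ 3 * rescale (X ^ 3) F₃
  eq₄ : F₄ = rescale (X ^ 3) F₂ + X * C X ^ 4 * rescale (X ^ 6) F₂

theorem IsCapparelliSystem.sub {F₂ F₃ F₄ G₂ G₃ G₄ : ℚ⟦X⟧⟦X⟧}
    (hF : IsCapparelliSystem F₂ F₃ F₄) (hG : IsCapparelliSystem G₂ G₃ G₄) :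
    IsCapparelliSystem (F₂ - G₂) (F₃ - G₃) (F₄ - G₄) where
  eq₂ := by simp only [map_sub]; linear_combination hF.eq₂ - hG.eq₂
  eq₃ := by simp only [map_sub]; linear_combination hF.eq₃ - hG.eq₃
  eq₄ := by simp only [map_sub]; linear_combination hF.eq₄ - hG.eq₄

theorem IsCapparelliSystem.eq_zero {D₂ D₃ D₄ : ℚ⟦X⟧⟦X⟧} (hD : IsCapparelliSystem D₂ D₃ D₄)
    (h₀ : coeff 0 D₂ = 0) : D₂ = 0 := by
  suffices h : ∀ M, coeff M D₂ = 0 ∧ coeff M D₃ = 0 from ext fun M => by simpa using (h M).1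
  intro M
  induction M using Nat.strong_induction_on with
  | _ M ih =>
  have c₂ := congrArg (coeff M) hD.eq₂
  have c₃ := congrArg (coeff M) hD.eq₃
  have c₄ := congrArg (coeff M) hD.eq₄
  rcases M with _ | m
  · simp only [map_add, mul_assoc, coeff_zero_X_mul, pow_zero, one_mul, add_zero,
      coeff_rescale] at c₃ c₄
    exact ⟨h₀, by rw [c₃, c₄, h₀]⟩
  obtain ⟨h₂, h₃⟩ := ih m (by omega)
  simp only [map_add, mul_assoc, coeff_succ_X_mul, coeff_X_pow_mul', ← map_pow, coeff_C_mul,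
    coeff_rescale, h₂, h₃, (ih (m + 1 - 2) (by omega)).1, mul_zero, add_zero, ite_self]
    at c₂ c₃ c₄
  have hne : (1 - (X ^ 3) ^ (m + 1) : ℚ⟦X⟧) ≠ 0 := fun h => by
    simpa using congrArg constantCoeff h
  have hD₂ : coeff (m + 1) D₂ = 0 :=
    (mul_eq_zero.mp (by linear_combination c₂ + c₃ + c₄)).resolve_left hne
  exact ⟨hD₂, by rw [c₃, c₄, hD₂, mul_zero]⟩

theorem isCapparelliSystem_capparelliGF :
    IsCapparelliSystem (capparelliGF 2) (capparelliGF 3) (capparelliGF 4) := by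
  have h₅ : capparelliGF 5 = rescale (X ^ 3) (capparelliGF 2) := capparelliGF_add_three 2
  have h₆ : capparelliGF 6 = rescale (X ^ 3) (capparelliGF 3) := capparelliGF_add_three 3
  have h₈ : capparelliGF 8 = rescale (X ^ 6) (capparelliGF 2) := by
    rw [capparelliGF_add_three 5, h₅, rescale_rescale, ← pow_add]
  have e₂ := capparelliGF_eq_add 2
  have e₃ := capparelliGF_eq_add 3
  have e₄ := capparelliGF_eq_add 4
  rw [listGF_isCapparelliTail_two, h₆, h₈] at e₂
  rw [listGF_isCapparelliTail (d := 6) (fun y => by unfold CapparelliRel; omega), h₆] at e₃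
  rw [listGF_isCapparelliTail (d := 8) (fun y => by unfold CapparelliRel; omega), h₅, h₈] at e₄
  exact ⟨by linear_combination e₂, by linear_combination e₃, by linear_combination e₄⟩

theorem isCapparelliSystem_andrewsGordon :
    IsCapparelliSystem (andrewsGordon 0 0) (andrewsGordon 1 3) (andrewsGordon 2 6) := by
  have r₀₀ : rescale (X ^ 3) (andrewsGordon 0 0) = andrewsGordon 3 6 := rescale_andrewsGordon 0 0
  have r₁₃ : rescale (X ^ 3) (andrewsGordon 1 3) = andrewsGordon 4 9 := rescale_andrewsGordon 1 3
  have r₃₆ : rescale (X ^ 3) (andrewsGordon 3 6) = andrewsGordon 6 12 :=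
    rescale_andrewsGordon 3 6
  have r₆ : rescale (X ^ 6) (andrewsGordon 0 0) = andrewsGordon 6 12 := by
    rw [show (X ^ 6 : ℚ⟦X⟧) = X ^ 3 * X ^ 3 by ring, ← rescale_rescale, r₀₀, r₃₆]
  have a₀₀ : andrewsGordon 0 0 = andrewsGordon 1 0 + X * C X ^ 2 * andrewsGordon 4 6 :=
    andrewsGordon_eq_add_X_mul 0 0
  have a₁₃ : andrewsGordon 1 3 = andrewsGordon 2 3 + X * C X ^ 3 * andrewsGordon 5 9 :=
    andrewsGordon_eq_add_X_mul 1 3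
  have a₂₆ : andrewsGordon 2 6 = andrewsGordon 3 6 + X * C X ^ 4 * andrewsGordon 6 12 :=
    andrewsGordon_eq_add_X_mul 2 6
  have a₄₉ : andrewsGordon 4 9 = andrewsGordon 5 9 + X * C X ^ 6 * andrewsGordon 8 15 :=
    andrewsGordon_eq_add_X_mul 4 9
  have a₆₁₂ : andrewsGordon 6 12 = andrewsGordon 7 12 + X * C X ^ 8 * andrewsGordon 10 18 :=
    andrewsGordon_eq_add_X_mul 6 12
  have b₁₀ : andrewsGordon 1 0 = andrewsGordon 1 3 + X ^ 2 * C X ^ 6 * andrewsGordon 7 12 :=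
    andrewsGordon_eq_add_X_sq_mul 1 0
  have b₂₃ : andrewsGordon 2 3 = andrewsGordon 2 6 + X ^ 2 * C X ^ 9 * andrewsGordon 8 15 :=
    andrewsGordon_eq_add_X_sq_mul 2 3
  have b₄₆ : andrewsGordon 4 6 = andrewsGordon 4 9 + X ^ 2 * C X ^ 12 * andrewsGordon 10 18 :=
    andrewsGordon_eq_add_X_sq_mul 4 6
  refine ⟨?_, ?_, ?_⟩
  · rw [r₁₃, r₆]
    linear_combination a₀₀ + b₁₀ + X * C X ^ 2 * b₄₆ - X ^ 2 * C X ^ 6 * a₆₁₂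
  · rw [r₁₃]
    linear_combination a₁₃ + b₂₃ - X * C X ^ 3 * a₄₉
  · rw [r₀₀, r₆]
    exact a₂₆

theorem capparelliGF_two_eq_andrewsGordon : capparelliGF 2 = andrewsGordon 0 0 := by
  refine sub_eq_zero.mp
    ((isCapparelliSystem_capparelliGF.sub isCapparelliSystem_andrewsGordon).eq_zero ?_)
  rw [map_sub, coeff_zero_andrewsGordon, capparelliGF,
    coeff_zero_listGF ⟨List.forall_mem_nil _, List.isChain_nil⟩, sub_self]

end Capparelli

open Capparelli in
/-- Andrews–Gordon type series for the first Capparelli identity: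
`∑_{m,n≥0} cp₁(n,m) qⁿ xᵐ = ∑_{n₁,n₂≥0} q^{2n₁²+6n₁n₂+6n₂²} x^{n₁+2n₂}/((q;q)_{n₁}(q³;q³)_{n₂})`,
stated coefficient-wise: the coefficient of `qᴺ xᴹ` on the right only receives contributions
from pairs `(n₁,n₂)` with `n₁ + 2n₂ = M` and `n₁, n₂ ≤ N`. -/
theorem capparelli_first_genfunc (N M : ℕ) :
    (Nat.card {l : List ℕ // l.length = M ∧ (∀ x ∈ l, 2 ≤ x) ∧ l.sum = N ∧
        l.Chain' (fun a b => a + 2 ≤ b ∧ ((a + b) % 3 = 0 ∨ a + 4 ≤ b))} : ℚ) =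
    ∑ p ∈ (range (N + 1) ×ˢ range (N + 1)).filter (fun p => p.1 + 2 * p.2 = M),
      coeff N (X ^ (2 * p.1 ^ 2 + 6 * p.1 * p.2 + 6 * p.2 ^ 2) *
        (∏ j ∈ range p.1, (1 - X ^ (j + 1) : PowerSeries ℚ))⁻¹ *
        (∏ j ∈ range p.2, (1 - X ^ (3 * (j + 1)) : PowerSeries ℚ))⁻¹) := by
  have hcard : Nat.card {l : List ℕ // l.length = M ∧ (∀ x ∈ l, 2 ≤ x) ∧ l.sum = N ∧
      l.Chain' (fun a b => a + 2 ≤ b ∧ ((a + b) % 3 = 0 ∨ a + 4 ≤ b))} =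
      Nat.card {l : List ℕ // l.length = M ∧ l.sum = N ∧ IsCapparelli 2 l} :=
    Nat.card_congr (Equiv.subtypeEquivRight fun _ =>
      ⟨fun ⟨hM, h₂, hN, hl⟩ => ⟨hM, hN, h₂, hl⟩, fun ⟨hM, hN, h₂, hl⟩ => ⟨hM, h₂, hN, hl⟩⟩)
  rw [hcard, ← coeff_coeff_listGF, ← capparelliGF, capparelliGF_two_eq_andrewsGordon,
    coeff_coeff_andrewsGordon]
  simp only [agTerm, zero_mul, add_zero]
end

section
/- Let cp_0(n,m) be the number of partitions of n into m parts where consecutive parts differ by at least 2, and differ by at least 4 unless their sum is a multiple of 3. Then \sum_{m,n\ge 0} cp_0(n,m) q^n x^m = \sum_{n_1,n_2\ge 0} q^{6n_2^2+2n_1^2+6n_2 n_1}(1 + x q^{6n_2+3n_1+1}) x^{2n_2+n_1} / ((q;q)_{n_1}(q^3;q^3)_{n_2}). -/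
open PowerSeries Finset

/-!
Let `A_M, B_M, C_M, D_M` be the generating functions in `q` of the partitions counted by `cp₀`
with `M` parts whose smallest part is arbitrary, `≥ 2`, `≥ 3`, `≠ 2` respectively. Removing a
smallest part `1`, `2` or `3` and lowering all remaining parts by `3` (harmless for the gap
conditions, which only see `a + b mod 3`) gives
`A_{M+1} = B_{M+1} + q^{3M+1} B_M`, `B_{M+1} = C_{M+1} + q^{3M+2} D_M`,
`A_{M+1} = D_{M+1} + q^{3M+2} D_M` and `C_{M+1} = q^{3M+3} (C_M + A_{M+1})`.
As `1 - q^{3M+3}` is invertible, these recurrences determine the four sequences. The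
`x^M`-coefficients of the double sum and of three companion sums satisfy the same recurrences,
by the telescoping `(1 - q^n) / (q;q)_n = 1 / (q;q)_{n-1}` in `n₁` and its analogue for
`(q³;q³)_{n₂}` in `n₂`.
-/

noncomputable section

namespace CP0

section Uniqueness

variable {R : Type*} [CommRing R]

theorem isUnit_one_sub_X_pow {k : ℕ} (hk : k ≠ 0) : IsUnit (1 - X ^ k : R⟦X⟧) := by
  rw [isUnit_iff_constantCoeff]
  simp [hk]

structure Recurrences (A B C D : ℕ → R⟦X⟧) : Prop where
  zero_A : A 0 = 1
  zero_B : B 0 = 1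
  zero_C : C 0 = 1
  zero_D : D 0 = 1
  succ_A_B (M : ℕ) : A (M + 1) = B (M + 1) + X ^ (3 * M + 1) * B M
  succ_B_C (M : ℕ) : B (M + 1) = C (M + 1) + X ^ (3 * M + 2) * D M
  succ_C_A (M : ℕ) : C (M + 1) = X ^ (3 * M + 3) * C M + X ^ (3 * M + 3) * A (M + 1)
  succ_A_D (M : ℕ) : A (M + 1) = D (M + 1) + X ^ (3 * M + 2) * D M

theorem Recurrences.eq {A B C D A' B' C' D' : ℕ → R⟦X⟧} (h : Recurrences A B C D)
    (h' : Recurrences A' B' C' D') : A = A' := by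
  suffices ∀ M, A M = A' M ∧ B M = B' M ∧ C M = C' M ∧ D M = D' M from
    funext fun M => (this M).1
  intro M
  induction M with
  | zero => simp only [h.zero_A, h.zero_B, h.zero_C, h.zero_D, h'.zero_A, h'.zero_B, h'.zero_C,
      h'.zero_D, and_self]
  | succ M ih =>
    obtain ⟨-, hB, hC, hD⟩ := ih
    -- `(1 - X^(3M+3)) C (M+1) = X^(3M+3) (C M + X^(3M+1) B M + X^(3M+2) D M)`
    have hC₁ : C (M + 1) = C' (M + 1) := by
      refine (isUnit_one_sub_X_pow (R := R) (k := 3 * M + 3) (by omega)).mul_left_cancel ?_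
      linear_combination h.succ_C_A M - h'.succ_C_A M
        + X ^ (3 * M + 3) * (h.succ_A_B M - h'.succ_A_B M + h.succ_B_C M - h'.succ_B_C M)
        + X ^ (3 * M + 3) * (hC + X ^ (3 * M + 1) * hB + X ^ (3 * M + 2) * hD)
    have hB₁ : B (M + 1) = B' (M + 1) := by
      linear_combination h.succ_B_C M - h'.succ_B_C M + hC₁ + X ^ (3 * M + 2) * hD
    have hA₁ : A (M + 1) = A' (M + 1) := by
      linear_combination h.succ_A_B M - h'.succ_A_B M + hB₁ + X ^ (3 * M + 1) * hB
    refine ⟨hA₁, hB₁, hC₁, ?_⟩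
    linear_combination -(h.succ_A_D M - h'.succ_A_D M) + hA₁ - X ^ (3 * M + 2) * hD

end Uniqueness

def Gap (a b : ℕ) : Prop := a + 2 ≤ b ∧ ((a + b) % 3 = 0 ∨ a + 4 ≤ b)

theorem gap_add_three {a b : ℕ} : Gap (a + 3) (b + 3) ↔ Gap a b := by
  unfold Gap; omega

theorem head_le_of_isChain_gap {l : List ℕ} (hl : l.IsChain Gap) {a x : ℕ} (ha : a ∈ l.head?)
    (hx : x ∈ l) : a ≤ x := by
  obtain ⟨t, rfl⟩ : ∃ t, l = a :: t := ⟨l.tail, (List.cons_head?_tail ha).symm⟩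
  have hle : (a :: t).Pairwise (· ≤ ·) :=
    List.isChain_iff_pairwise.mp (hl.imp fun _ _ h => by unfold Gap at h; omega)
  rcases List.mem_cons.mp hx with rfl | hx
  · rfl
  · exact List.rel_of_pairwise_cons hle hx

-- The parts sum to `N - c`: the offset `c` records the weight of parts already removed.
def Admissible (P : ℕ → Prop) (c N M : ℕ) (l : List ℕ) : Prop :=
  l.length = M ∧ (∀ x ∈ l, 0 < x) ∧ c + l.sum = N ∧ l.IsChain Gap ∧ ∀ x ∈ l.head?, P x

variable {P : ℕ → Prop} {c N M : ℕ}

instance (P : ℕ → Prop) (c N M : ℕ) : Finite {l // Admissible P c N M l} :=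
  Finite.of_injective
    (fun l => (⟨l.1, l.2.2.1 _, by have := l.2.2.2.1; omega⟩ : Composition (N - c)))
    fun _ _ h => Subtype.ext (congrArg Composition.blocks h)

theorem admissible_cons_iff {a : ℕ} {t : List ℕ} :
    Admissible P c N (M + 1) (a :: t) ↔ 0 < a ∧ P a ∧ Admissible (Gap a) (c + a) N M t := by
  simp only [Admissible, List.length_cons, List.forall_mem_cons, List.sum_cons, List.isChain_cons,
    List.head?_cons, Option.mem_def, Option.some.injEq, forall_eq']
  constructor
  · rintro ⟨hlen, ⟨ha, ht⟩, hsum, ⟨hgap, hchain⟩, hP⟩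
    exact ⟨ha, hP, by omega, ht, by omega, hchain, hgap⟩
  · rintro ⟨ha, hP, hlen, ht, hsum, hchain, hgap⟩
    exact ⟨by omega, ⟨ha, ht⟩, by omega, ⟨hgap, hchain⟩, hP⟩

theorem admissible_and_ne_iff {v : ℕ} {l : List ℕ} :
    Admissible (fun x => P x ∧ x ≠ v) c N M l ↔ Admissible P c N M l ∧ l.head? ≠ some v := by
  unfold Admissible
  rcases l.head? with _ | a <;> simp [and_assoc]

theorem card_admissible_succ {v : ℕ} (hv : 0 < v) (hPv : P v) :
    Nat.card {l // Admissible P c N (M + 1) l} =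
      Nat.card {l // Admissible (fun x => P x ∧ x ≠ v) c N (M + 1) l} +
        Nat.card {l // Admissible (Gap v) (c + v) N M l} := by
  classical
  have eHead : {l // Admissible P c N (M + 1) l ∧ l.head? = some v} ≃
      {l // Admissible (Gap v) (c + v) N M l} :=
    { toFun l := ⟨l.1.tail, (admissible_cons_iff.1 ((List.cons_head?_tail l.2.2) ▸ l.2.1)).2.2⟩
      invFun t := ⟨v :: t.1, admissible_cons_iff.2 ⟨hv, hPv, t.2⟩, rfl⟩
      left_inv l := Subtype.ext (List.cons_head?_tail l.2.2)
      right_inv _ := rfl }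
  have eRest : {l // Admissible P c N (M + 1) l ∧ ¬ l.head? = some v} ≃
      {l // Admissible (fun x => P x ∧ x ≠ v) c N (M + 1) l} :=
    Equiv.subtypeEquivRight fun _ => admissible_and_ne_iff.symm
  let split := Equiv.sumCompl fun l : {l // Admissible P c N (M + 1) l} => l.1.head? = some v
  let flatten := Equiv.subtypeSubtypeEquivSubtypeInter (Admissible P c N (M + 1))
  rw [Nat.card_congr (split.symm.trans (((flatten _).trans eHead).sumCongr
    ((flatten fun l => ¬ l.head? = some v).trans eRest))), Nat.card_sum, add_comm]

theorem sum_map_add_const (l : List ℕ) (k : ℕ) : (l.map (· + k)).sum = l.sum + k * l.length := by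
  simp [List.sum_map_add, mul_comm]

theorem Admissible.le_of_mem {l : List ℕ} (hl : Admissible P c N M l) {k : ℕ}
    (hP : ∀ x, P x → k ≤ x) {x : ℕ} (hx : x ∈ l) : k ≤ x := by
  obtain ⟨a, ha⟩ := Option.isSome_iff_exists.mp (List.isSome_head?.mpr (List.ne_nil_of_mem hx))
  exact (hP a (hl.2.2.2.2 a ha)).trans (head_le_of_isChain_gap hl.2.2.2.1 ha hx)

theorem admissible_map_add_three_iff (hP : ∀ x, P x → 4 ≤ x) {l : List ℕ} :
    Admissible P c N M (l.map (· + 3)) ↔ Admissible (fun x => P (x + 3)) (c + 3 * M) N M l := by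
  refine ⟨fun h => ?_, fun h => ?_⟩
  · have hpos : ∀ x ∈ l, 0 < x := fun x hx => by
      have := h.le_of_mem hP (List.mem_map_of_mem hx)
      omega
    simp only [Admissible, List.length_map, List.isChain_map, gap_add_three, List.head?_map,
      Option.forall_mem_map, sum_map_add_const] at h ⊢
    exact ⟨h.1, hpos, by omega, h.2.2.2⟩
  · simp only [Admissible, List.length_map, List.forall_mem_map, List.isChain_map, gap_add_three,
      List.head?_map, Option.forall_mem_map, sum_map_add_const] at h ⊢
    exact ⟨h.1, fun _ _ => by omega, by omega, h.2.2.2⟩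

theorem card_admissible_shift (hP : ∀ x, P x → 4 ≤ x) :
    Nat.card {l // Admissible P c N M l} =
      Nat.card {l // Admissible (fun x => P (x + 3)) (c + 3 * M) N M l} := by
  have hinj : Function.Injective (List.map (· + 3)) :=
    List.map_injective_iff.2 (add_left_injective 3)
  refine (Nat.card_eq_of_bijective
    (fun l => ⟨l.1.map (· + 3), (admissible_map_add_three_iff hP).2 l.2⟩)
    ⟨fun l l' h => Subtype.ext (hinj (congrArg Subtype.val h)), fun l => ?_⟩).symm
  have hmap : (l.1.map (· - 3)).map (· + 3) = l.1 := by
    rw [List.map_map]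
    refine (List.map_congr_left fun x hx => Nat.sub_add_cancel ?_).trans (List.map_id _)
    have := l.2.le_of_mem hP hx
    omega
  exact ⟨⟨l.1.map (· - 3), (admissible_map_add_three_iff hP).1 (by rw [hmap]; exact l.2)⟩,
    Subtype.ext hmap⟩

def genFun (P : ℕ → Prop) (M : ℕ) : ℚ⟦X⟧ :=
  PowerSeries.mk fun N => (Nat.card {l // Admissible P 0 N M l} : ℚ)

theorem coeff_genFun (P : ℕ → Prop) (N M : ℕ) :
    coeff N (genFun P M) = Nat.card {l // Admissible P 0 N M l} :=
  coeff_mk _ _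

theorem coeff_X_pow_mul_genFun (P : ℕ → Prop) (c N M : ℕ) :
    coeff N (X ^ c * genFun P M : ℚ⟦X⟧) = Nat.card {l // Admissible P c N M l} := by
  rw [coeff_X_pow_mul', coeff_genFun]
  split_ifs with hc
  · refine congrArg _ (Nat.card_congr (Equiv.subtypeEquivRight fun l => ?_))
    constructor <;> rintro ⟨hlen, hpos, hsum, hrest⟩ <;> exact ⟨hlen, hpos, by omega, hrest⟩
  · have : IsEmpty {l // Admissible P c N M l} := ⟨fun l => hc (by have := l.2.2.2.1; omega)⟩
    simp

theorem coeff_genFun_true (N M : ℕ) :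
    coeff N (genFun (fun _ => True) M) =
      Nat.card {l : List ℕ // l.length = M ∧ (∀ x ∈ l, 0 < x) ∧ l.sum = N ∧ l.IsChain Gap} := by
  rw [coeff_genFun]
  congr 1
  refine Nat.card_congr (Equiv.subtypeEquivRight fun l => ?_)
  simp [Admissible]

theorem genFun_zero (P : ℕ → Prop) : genFun P 0 = 1 := by
  ext N
  have hAdm : ∀ l, Admissible P 0 N 0 l ↔ l = [] ∧ N = 0 := by
    intro l
    constructor
    · rintro ⟨hlen, -, hsum, -⟩
      obtain rfl := List.length_eq_zero_iff.mp hlen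
      simpa using hsum.symm
    · rintro ⟨rfl, rfl⟩
      simp [Admissible]
  rw [coeff_genFun, coeff_one, Nat.card_congr (Equiv.subtypeEquivRight hAdm)]
  split_ifs with hN <;> simp [hN]

theorem genFun_congr {P P' : ℕ → Prop} (h : ∀ x, 0 < x → (P x ↔ P' x)) :
    genFun P = genFun P' := by
  have hAdm (M N : ℕ) (l : List ℕ) : Admissible P 0 N M l ↔ Admissible P' 0 N M l := by
    unfold Admissible
    exact and_congr_right fun _ => and_congr_right fun hpos => and_congr_right fun _ =>
      and_congr_right fun _ => forall_congr' fun x => imp_congr_right fun hx =>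
        h x (hpos x (List.mem_of_mem_head? hx))
  funext M
  simp only [genFun, fun N => Nat.card_congr (Equiv.subtypeEquivRight (hAdm M N))]

theorem genFun_eq_X_pow_mul_genFun_shift (hP : ∀ x, P x → 4 ≤ x) (M : ℕ) :
    genFun P M = X ^ (3 * M) * genFun (fun x => P (x + 3)) M := by
  ext N
  rw [coeff_X_pow_mul_genFun, coeff_genFun, card_admissible_shift hP, zero_add]

theorem genFun_succ {P Q R : ℕ → Prop} {v : ℕ} (hv : 0 < v) (hPv : P v)
    (hQ : ∀ x, 0 < x → (P x ∧ x ≠ v ↔ Q x)) (hR : ∀ x, 0 < x → (Gap v (x + 3) ↔ R x)) (M : ℕ) :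
    genFun P (M + 1) = genFun Q (M + 1) + X ^ (3 * M + v) * genFun R M := by
  have hGap : ∀ x, Gap v x → 4 ≤ x := fun x hx => by unfold Gap at hx; omega
  rw [← genFun_congr hQ, ← genFun_congr hR]
  ext N
  rw [map_add, add_comm (3 * M), coeff_X_pow_mul_genFun, ← card_admissible_shift hGap,
    coeff_genFun, coeff_genFun, card_admissible_succ hv hPv, zero_add, Nat.cast_add]

theorem genFun_recurrences :
    Recurrences (genFun fun _ => True) (genFun (2 ≤ ·)) (genFun (3 ≤ ·)) (genFun (· ≠ 2)) where
  zero_A := genFun_zero _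
  zero_B := genFun_zero _
  zero_C := genFun_zero _
  zero_D := genFun_zero _
  succ_A_B := genFun_succ one_pos trivial (fun x _ => by simp only [true_and]; omega)
    (fun x _ => by unfold Gap; omega)
  succ_B_C := genFun_succ two_pos le_rfl (fun x _ => by omega) (fun x _ => by unfold Gap; omega)
  succ_A_D := genFun_succ two_pos trivial (fun x _ => by simp only [true_and])
    (fun x _ => by unfold Gap; omega)
  succ_C_A M := by
    rw [genFun_succ (Q := (4 ≤ ·)) (R := (3 ≤ ·)) three_pos le_rfl (fun x _ => by omega)
      (fun x _ => by unfold Gap; omega), genFun_eq_X_pow_mul_genFun_shift (fun _ hx => hx),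
      genFun_congr (P := fun x => 4 ≤ x + 3) (P' := fun _ => True)
        (fun x hx => by simp only [iff_true]; omega), add_comm, mul_add 3 M 1, mul_one]

-- `qPoch k n = (q^k; q^k)_n`
def qPoch {R : Type*} [CommRing R] (k n : ℕ) : R⟦X⟧ := ∏ j ∈ range n, (1 - X ^ (k * (j + 1)))

theorem one_sub_X_pow_mul_inv_qPoch_succ {K : Type*} [Field K] {k : ℕ} (hk : 0 < k) (n : ℕ) :
    (1 - X ^ (k * (n + 1)) : K⟦X⟧) * (qPoch k (n + 1))⁻¹ = (qPoch k n)⁻¹ := by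
  have h : constantCoeff (1 - X ^ (k * (n + 1)) : K⟦X⟧) ≠ 0 := by
    rw [map_sub, map_one, map_pow, constantCoeff_X, zero_pow (by positivity), sub_zero]
    exact one_ne_zero
  rw [qPoch, prod_range_succ, PowerSeries.mul_inv_rev, ← mul_assoc,
    PowerSeries.mul_inv_cancel _ h, one_mul, qPoch]

def quadForm (p : ℕ × ℕ) : ℕ := 6 * p.2 ^ 2 + 2 * p.1 ^ 2 + 6 * p.2 * p.1

def term (b : ℕ) (p : ℕ × ℕ) : ℚ⟦X⟧ := X ^ b * (qPoch 1 p.1)⁻¹ * (qPoch 3 p.2)⁻¹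

theorem term_sub_term_fst (b : ℕ) (p : ℕ × ℕ) :
    term b (p.1 + 1, p.2) - term (b + (p.1 + 1)) (p.1 + 1, p.2) = term b p := by
  rw [term, term, term, ← one_sub_X_pow_mul_inv_qPoch_succ one_pos p.1, one_mul, pow_add]
  ring

theorem term_sub_term_snd (b : ℕ) (p : ℕ × ℕ) :
    term b (p.1, p.2 + 1) - term (b + 3 * (p.2 + 1)) (p.1, p.2 + 1) = term b p := by
  rw [term, term, term, ← one_sub_X_pow_mul_inv_qPoch_succ three_pos p.2, pow_add]
  ring

theorem coeff_term_of_lt {N b : ℕ} (h : N < b) (p : ℕ × ℕ) : coeff N (term b p) = 0 := by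
  rw [term, mul_assoc, coeff_X_pow_mul', if_neg (by omega)]

def weightFiber (s M : ℕ) : Finset (ℕ × ℕ) :=
  (range (M + 1) ×ˢ range (M + 1)).filter fun p => p.1 + 2 * p.2 + s = M

theorem mem_weightFiber {s M : ℕ} {p : ℕ × ℕ} :
    p ∈ weightFiber s M ↔ p.1 + 2 * p.2 + s = M := by
  rw [weightFiber, mem_filter, mem_product, mem_range, mem_range]
  omega

theorem weightFiber_succ (s M : ℕ) : weightFiber (s + 1) (M + 1) = weightFiber s M := by
  ext p
  rw [mem_weightFiber, mem_weightFiber]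
  omega

theorem sum_weightFiber_eq_sum_shift {R : Type*} [AddCommMonoid R] (F : ℕ × ℕ → R) (i j s M : ℕ)
    (hF : ∀ p : ℕ × ℕ, p.1 < i ∨ p.2 < j → F p = 0) :
    ∑ p ∈ weightFiber s M, F p = ∑ p ∈ weightFiber (s + i + 2 * j) M, F (p.1 + i, p.2 + j) := by
  rw [← sum_image (g := fun p : ℕ × ℕ => (p.1 + i, p.2 + j)) fun p _ q _ h => by
    simp only [Prod.mk.injEq, add_left_inj] at h
    exact Prod.ext h.1 h.2]
  refine (sum_subset (fun p hp => ?_) fun p hp hnot => hF p ?_).symm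
  · obtain ⟨q, hq, rfl⟩ := mem_image.mp hp
    rw [mem_weightFiber] at hq ⊢
    dsimp only
    omega
  · by_contra! h
    refine hnot (mem_image.mpr ⟨(p.1 - i, p.2 - j), ?_, Prod.ext ?_ ?_⟩)
    · rw [mem_weightFiber] at hp ⊢
      dsimp only
      omega
    all_goals dsimp only; omega

/-- `xCoeff c d e s M` is the coefficient of `x ^ M` in
`∑ q ^ (quadForm (n₁, n₂) + c n₁ + d n₂ + e) x ^ (n₁ + 2 n₂ + s) / ((q; q)_{n₁} (q³; q³)_{n₂})`. -/
def xCoeff (c d e s M : ℕ) : ℚ⟦X⟧ :=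
  ∑ p ∈ weightFiber s M, term (quadForm p + c * p.1 + d * p.2 + e) p

theorem xCoeff_succ (c d e s M : ℕ) : xCoeff c d e (s + 1) (M + 1) = xCoeff c d e s M := by
  rw [xCoeff, xCoeff, weightFiber_succ]

theorem xCoeff_zero_zero (c d : ℕ) : xCoeff c d 0 0 0 = 1 := by
  have : weightFiber 0 0 = {(0, 0)} := by
    ext p
    rw [mem_weightFiber, mem_singleton, Prod.ext_iff]
    omega
  simp [xCoeff, this, term, qPoch, quadForm]

theorem xCoeff_succ_zero (c d e s : ℕ) : xCoeff c d e (s + 1) 0 = 0 := by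
  have : weightFiber (s + 1) 0 = ∅ := by
    ext p
    rw [mem_weightFiber]
    simp
  rw [xCoeff, this, sum_empty]

theorem xCoeff_eq_add_fst (c d e s M : ℕ) :
    xCoeff c d e s M = xCoeff (c + 1) d e s M + xCoeff (c + 4) (d + 6) (e + c + 2) (s + 1) M := by
  rw [← sub_eq_iff_eq_add', xCoeff, xCoeff, ← sum_sub_distrib,
    sum_weightFiber_eq_sum_shift _ 1 0 s M fun p hp => by simp [show p.1 = 0 by omega]]
  refine sum_congr rfl fun p _ => ?_
  rw [← term_sub_term_fst _ p]
  congr 2 <;> simp only [quadForm] <;> ring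

theorem xCoeff_eq_add_snd (c d e s M : ℕ) :
    xCoeff c d e s M = xCoeff c (d + 3) e s M + xCoeff (c + 6) (d + 12) (e + d + 6) (s + 2) M := by
  rw [← sub_eq_iff_eq_add', xCoeff, xCoeff, ← sum_sub_distrib,
    sum_weightFiber_eq_sum_shift _ 0 1 s M fun p hp => by simp [show p.2 = 0 by omega]]
  refine sum_congr rfl fun p _ => ?_
  rw [← term_sub_term_snd _ p]
  congr 2 <;> simp only [quadForm] <;> ring

theorem X_pow_mul_xCoeff (k c d e s M : ℕ) :
    X ^ (3 * M + k) * xCoeff c d e s M = xCoeff (c + 3) (d + 6) (e + 3 * s + k) s M := by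
  rw [xCoeff, xCoeff, mul_sum]
  refine sum_congr rfl fun p hp => ?_
  rw [mem_weightFiber] at hp
  rw [term, term, ← mul_assoc, ← mul_assoc, ← pow_add, ← hp]
  congr 3
  ring

theorem xCoeff_recurrences :
    Recurrences (fun M => xCoeff 0 0 0 0 M + xCoeff 3 6 1 1 M)
      (fun M => xCoeff 1 0 0 0 M + xCoeff 4 6 2 1 M) (fun M => xCoeff 2 3 0 0 M + xCoeff 5 9 3 1 M)
      (fun M => xCoeff 1 0 0 0 M + xCoeff 4 6 1 1 M) where
  zero_A := by simp only [xCoeff_zero_zero, xCoeff_succ_zero, add_zero]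
  zero_B := by simp only [xCoeff_zero_zero, xCoeff_succ_zero, add_zero]
  zero_C := by simp only [xCoeff_zero_zero, xCoeff_succ_zero, add_zero]
  zero_D := by simp only [xCoeff_zero_zero, xCoeff_succ_zero, add_zero]
  succ_A_B M := by
    linear_combination xCoeff_eq_add_fst 0 0 0 0 (M + 1) + xCoeff_eq_add_fst 3 6 1 1 (M + 1)
      + xCoeff_succ 4 6 1 0 M + xCoeff_succ 7 12 6 1 M
      - X_pow_mul_xCoeff 1 1 0 0 0 M - X_pow_mul_xCoeff 1 4 6 2 1 M
  succ_B_C M := by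
    linear_combination xCoeff_eq_add_fst 1 0 0 0 (M + 1) + xCoeff_eq_add_snd 2 0 0 0 (M + 1)
      + xCoeff_eq_add_snd 5 6 3 1 (M + 1) - xCoeff_eq_add_fst 7 12 6 2 (M + 1)
      + xCoeff_succ 4 6 2 0 M + xCoeff_succ 7 12 6 1 M
      - X_pow_mul_xCoeff 2 1 0 0 0 M - X_pow_mul_xCoeff 2 4 6 1 1 M
  succ_C_A M := by
    linear_combination xCoeff_eq_add_snd 2 3 0 0 (M + 1) + xCoeff_eq_add_fst 2 6 0 0 (M + 1)
      + xCoeff_succ 8 15 9 1 M + xCoeff_succ 5 9 3 0 M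
      - X_pow_mul_xCoeff 3 2 3 0 0 M - X_pow_mul_xCoeff 3 5 9 3 1 M
      - X_pow_mul_xCoeff 0 0 0 0 0 (M + 1) - X_pow_mul_xCoeff 0 3 6 1 1 (M + 1)
  succ_A_D M := by
    linear_combination xCoeff_eq_add_fst 0 0 0 0 (M + 1) + xCoeff_eq_add_fst 3 6 1 1 (M + 1)
      + xCoeff_succ 4 6 2 0 M + xCoeff_succ 7 12 6 1 M
      - X_pow_mul_xCoeff 2 1 0 0 0 M - X_pow_mul_xCoeff 2 4 6 1 1 M

theorem coeff_xCoeff (c d e s N M : ℕ) :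
    coeff N (xCoeff c d e s M) =
      ∑ p ∈ (range (N + 1) ×ˢ range (N + 1)).filter (fun p => p.1 + 2 * p.2 + s = M),
        coeff N (term (quadForm p + c * p.1 + d * p.2 + e) p) := by
  rw [xCoeff, map_sum]
  refine (sum_subset (fun p hp => mem_weightFiber.mpr (mem_filter.mp hp).2)
    fun p hp hnot => ?_).symm
  rw [mem_weightFiber] at hp
  have hbox : N < p.1 ∨ N < p.2 := by
    by_contra! h
    exact hnot (mem_filter.mpr
      ⟨mem_product.mpr ⟨mem_range.mpr (by omega), mem_range.mpr (by omega)⟩, hp⟩)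
  refine coeff_term_of_lt ?_ p
  have := Nat.le_self_pow two_ne_zero p.1
  have := Nat.le_self_pow two_ne_zero p.2
  unfold quadForm
  omega

end CP0

open CP0 in
/-- Andrews–Gordon type series for `cp₀(n,m)` (no restriction on the smallest part),
stated coefficient-wise in `q` and `x`. -/
theorem cp0_genfunc (N M : ℕ) :
    (Nat.card {l : List ℕ // l.length = M ∧ (∀ x ∈ l, 0 < x) ∧ l.sum = N ∧
        l.Chain' (fun a b => a + 2 ≤ b ∧ ((a + b) % 3 = 0 ∨ a + 4 ≤ b))} : ℚ) =
    (∑ p ∈ (range (N + 1) ×ˢ range (N + 1)).filter (fun p => p.1 + 2 * p.2 = M),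
      coeff N (X ^ (6 * p.2 ^ 2 + 2 * p.1 ^ 2 + 6 * p.2 * p.1) *
        (∏ j ∈ range p.1, (1 - X ^ (j + 1) : PowerSeries ℚ))⁻¹ *
        (∏ j ∈ range p.2, (1 - X ^ (3 * (j + 1)) : PowerSeries ℚ))⁻¹)) +
    (∑ p ∈ (range (N + 1) ×ˢ range (N + 1)).filter (fun p => p.1 + 2 * p.2 + 1 = M),
      coeff N (X ^ (6 * p.2 ^ 2 + 2 * p.1 ^ 2 + 6 * p.2 * p.1 +
          (6 * p.2 + 3 * p.1 + 1)) *
        (∏ j ∈ range p.1, (1 - X ^ (j + 1) : PowerSeries ℚ))⁻¹ *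
        (∏ j ∈ range p.2, (1 - X ^ (3 * (j + 1)) : PowerSeries ℚ))⁻¹)) := by
  refine (coeff_genFun_true N M).symm.trans ?_
  rw [congrFun (genFun_recurrences.eq xCoeff_recurrences) M, map_add, coeff_xCoeff, coeff_xCoeff]
  congr 1 <;> refine sum_congr (by simp) fun p _ => ?_
  · simp only [term, qPoch, quadForm, one_mul, zero_mul, add_zero]
  · simp only [term, qPoch, quadForm, one_mul]
    ring_nf
end
end
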